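/- arXiv:2411.04717 — 2 statements merged into one kernel-verified Lean document; each statement's English description precedes it below -/
import Mathlib

section
/- Suppose 2‖𝒜*(ψ)‖_op < 1, and let (α_n, β_n) be the sequence generated from α_0 = β_0 = φ by the closed-form alternating updates α_n = (2(1+λ)A_{β_{n−1}}^T A_{β_{n−1}} + I_d)^{−1}(2𝒜*(ψ)β_{n−1} + φ) and β_n = (2(1+λ)A_{α_n}^T A_{α_n} + I_d)^{−1}(2𝒜*(ψ)α_n + φ). Then for every ε > 0 there exists K₀(ε) such that for all n > K₀(ε), max{‖α_n‖₂, ‖β_n‖₂} ≤ ‖φ‖₂/(1 − 2‖𝒜*(ψ)‖_op) + ε. -/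
open Matrix Filter
open scoped BigOperators

noncomputable section

/-- squared Euclidean (ℓ2) norm of a vector in ℝ^m -/
def norm2sq {m : ℕ} (x : Fin m → ℝ) : ℝ := ∑ i, x i ^ 2

/-- Euclidean (ℓ2) norm of a vector in ℝ^m -/
def norm2 {m : ℕ} (x : Fin m → ℝ) : ℝ := Real.sqrt (norm2sq x)

/-- ℓ1 norm of a vector in ℝ^m -/
def norm1 {m : ℕ} (x : Fin m → ℝ) : ℝ := ∑ i, |x i|

/-- spectral (ℓ2 operator) norm of a matrix; for any matrix this equals its
largest singular value σ₁. -/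
def opNorm {m n : ℕ} (M : Matrix (Fin m) (Fin n) ℝ) : ℝ :=
  ‖LinearMap.toContinuousLinearMap (Matrix.toEuclideanLin M)‖

/-- the bilinear map 𝒜(α,β) ∈ ℝ^s with (𝒜(α,β))_k = αᵀ A_k β -/
def calA {d s : ℕ} (A : Fin s → Matrix (Fin d) (Fin d) ℝ) (α β : Fin d → ℝ) : Fin s → ℝ :=
  fun k => α ⬝ᵥ ((A k) *ᵥ β)

/-- the matrix A_τ ∈ ℝ^{s×d} whose k-th row is (A_k τ)ᵀ -/
def Amat {d s : ℕ} (A : Fin s → Matrix (Fin d) (Fin d) ℝ) (τ : Fin d → ℝ) :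
    Matrix (Fin s) (Fin d) ℝ :=
  Matrix.of fun k j => ((A k) *ᵥ τ) j

/-- the adjoint 𝒜*(c) = Σ_k c_k A_k ∈ ℝ^{d×d} -/
def Astar {d s : ℕ} (A : Fin s → Matrix (Fin d) (Fin d) ℝ) (c : Fin s → ℝ) :
    Matrix (Fin d) (Fin d) ℝ :=
  ∑ k, c k • A k

/-
The ball of radius `L = ‖φ‖ / (1 - 2‖𝒜*(ψ)‖)` is invariant under both updates, and it contains
the starting point `φ`, so the iterates never leave it. Invariance rests on one fact: for
`c ≥ 0` the matrix `M = c BᵀB + I` satisfies `xᵀx ≤ xᵀMx`, so `z = M⁻¹y` obeys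
`‖z‖² ≤ zᵀy ≤ ‖z‖‖y‖`, i.e. `M⁻¹` is a contraction. Hence an update of `x` has norm at most
`2‖𝒜*(ψ)‖‖x‖ + ‖φ‖`, and `L` is the fixed point of this affine bound.
-/

lemma norm2_eq_norm_toLp {m : ℕ} (x : Fin m → ℝ) : norm2 x = ‖WithLp.toLp 2 x‖ := by
  simp [norm2, norm2sq, EuclideanSpace.norm_eq, sq_abs]

lemma norm2_nonneg {m : ℕ} (x : Fin m → ℝ) : 0 ≤ norm2 x := Real.sqrt_nonneg _

lemma norm2_sq {m : ℕ} (x : Fin m → ℝ) : norm2 x ^ 2 = x ⬝ᵥ x := by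
  rw [norm2, norm2sq, Real.sq_sqrt (Finset.sum_nonneg fun i _ => sq_nonneg _)]
  simp [dotProduct, sq]

lemma norm2_add_le {m : ℕ} (x y : Fin m → ℝ) : norm2 (x + y) ≤ norm2 x + norm2 y := by
  simp only [norm2_eq_norm_toLp, WithLp.toLp_add]
  exact norm_add_le _ _

lemma norm2_smul {m : ℕ} (a : ℝ) (x : Fin m → ℝ) : norm2 (a • x) = |a| * norm2 x := by
  simp only [norm2_eq_norm_toLp, WithLp.toLp_smul, norm_smul, Real.norm_eq_abs]

lemma dotProduct_le_norm2_mul_norm2 {m : ℕ} (x y : Fin m → ℝ) :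
    x ⬝ᵥ y ≤ norm2 x * norm2 y := by
  have h := real_inner_le_norm (WithLp.toLp 2 y) (WithLp.toLp 2 x)
  rwa [EuclideanSpace.inner_eq_star_dotProduct, star_trivial, ← norm2_eq_norm_toLp,
    ← norm2_eq_norm_toLp, mul_comm (norm2 y)] at h

lemma opNorm_nonneg {m n : ℕ} (M : Matrix (Fin m) (Fin n) ℝ) : 0 ≤ opNorm M := norm_nonneg _

lemma norm2_mulVec_le {m n : ℕ} (M : Matrix (Fin m) (Fin n) ℝ) (x : Fin n → ℝ) :
    norm2 (M *ᵥ x) ≤ opNorm M * norm2 x := by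
  rw [norm2_eq_norm_toLp, norm2_eq_norm_toLp]
  exact (LinearMap.toContinuousLinearMap (toEuclideanLin M)).le_opNorm (WithLp.toLp 2 x)

lemma norm2_inv_mulVec_le_of_dotProduct_self_le {n : ℕ} {M : Matrix (Fin n) (Fin n) ℝ}
    (hM : ∀ x, x ⬝ᵥ x ≤ x ⬝ᵥ (M *ᵥ x)) (y : Fin n → ℝ) :
    norm2 (M⁻¹ *ᵥ y) ≤ norm2 y := by
  have hunit : IsUnit M := by
    refine mulVec_injective_iff_isUnit.mp fun x x' hxx' => sub_eq_zero.mp ?_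
    have h := hM (x - x')
    rw [mulVec_sub, hxx', sub_self, dotProduct_zero] at h
    exact dotProduct_self_eq_zero.mp (le_antisymm h (dotProduct_self_star_nonneg _))
  set z := M⁻¹ *ᵥ y
  have hz : M *ᵥ z = y := by
    rw [mulVec_mulVec, mul_nonsing_inv _ ((isUnit_iff_isUnit_det M).mp hunit), one_mulVec]
  have h : norm2 z ^ 2 ≤ norm2 z * norm2 y :=
    calc norm2 z ^ 2 = z ⬝ᵥ z := norm2_sq z
      _ ≤ z ⬝ᵥ y := hz ▸ hM z
      _ ≤ norm2 z * norm2 y := dotProduct_le_norm2_mul_norm2 z y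
  nlinarith [norm2_nonneg z, norm2_nonneg y]

lemma dotProduct_self_le_dotProduct_mulVec_gram {m n : ℕ} {c : ℝ} (hc : 0 ≤ c)
    (B : Matrix (Fin m) (Fin n) ℝ) (x : Fin n → ℝ) :
    x ⬝ᵥ x ≤ x ⬝ᵥ ((c • (Bᵀ * B) + 1) *ᵥ x) := by
  have hgram : x ⬝ᵥ ((Bᵀ * B) *ᵥ x) = (B *ᵥ x) ⬝ᵥ (B *ᵥ x) := by
    rw [← mulVec_mulVec, dotProduct_mulVec, vecMul_transpose]
  rw [add_mulVec, one_mulVec, smul_mulVec, dotProduct_add, dotProduct_smul, hgram, smul_eq_mul]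
  have hsq : 0 ≤ (B *ᵥ x) ⬝ᵥ (B *ᵥ x) := dotProduct_self_star_nonneg _
  linarith [mul_nonneg hc hsq]

lemma norm2_update_le {m n : ℕ} {c L : ℝ} (hc : 0 ≤ c) (B : Matrix (Fin m) (Fin n) ℝ)
    (S : Matrix (Fin n) (Fin n) ℝ) (φ x : Fin n → ℝ) (hx : norm2 x ≤ L)
    (hL : 2 * opNorm S * L + norm2 φ ≤ L) :
    norm2 ((c • (Bᵀ * B) + 1)⁻¹ *ᵥ ((2 : ℝ) • (S *ᵥ x) + φ)) ≤ L :=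
  calc _ ≤ norm2 ((2 : ℝ) • (S *ᵥ x) + φ) :=
        norm2_inv_mulVec_le_of_dotProduct_self_le
          (dotProduct_self_le_dotProduct_mulVec_gram hc B) _
    _ ≤ 2 * norm2 (S *ᵥ x) + norm2 φ := by
        simpa [norm2_smul] using norm2_add_le ((2 : ℝ) • (S *ᵥ x)) φ
    _ ≤ 2 * (opNorm S * L) + norm2 φ := by
        gcongr
        exact (norm2_mulVec_le S x).trans (by gcongr; exact opNorm_nonneg S)
    _ ≤ L := by linarith

theorem statement4_general {d s : ℕ}
    (A : Fin s → Matrix (Fin d) (Fin d) ℝ)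
    (φ : Fin d → ℝ) (ψ : Fin s → ℝ) (lam : ℝ) (hlam : 0 ≤ lam)
    (hop : 2 * opNorm (Astar A ψ) < 1)
    (α β : ℕ → Fin d → ℝ) (hα0 : α 0 = φ) (hβ0 : β 0 = φ)
    (hαrec : ∀ n, α (n + 1) =
      (((2 * (1 + lam)) • ((Amat A (β n))ᵀ * Amat A (β n)) + 1)⁻¹) *ᵥ
        ((2 : ℝ) • ((Astar A ψ) *ᵥ β n) + φ))
    (hβrec : ∀ n, β (n + 1) =
      (((2 * (1 + lam)) • ((Amat A (α (n + 1)))ᵀ * Amat A (α (n + 1))) + 1)⁻¹) *ᵥ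
        ((2 : ℝ) • ((Astar A ψ) *ᵥ α (n + 1)) + φ)) :
    ∀ ε : ℝ, 0 < ε → ∃ K₀ : ℕ, ∀ n : ℕ, K₀ < n →
      max (norm2 (α n)) (norm2 (β n))
        ≤ norm2 φ / (1 - 2 * opNorm (Astar A ψ)) + ε := by
  intro ε hε
  set L := norm2 φ / (1 - 2 * opNorm (Astar A ψ))
  have hgap : 0 < 1 - 2 * opNorm (Astar A ψ) := by linarith
  have hLfix : 2 * opNorm (Astar A ψ) * L + norm2 φ ≤ L := by
    have h : L * (1 - 2 * opNorm (Astar A ψ)) = norm2 φ := div_mul_cancel₀ _ hgap.ne'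
    linarith
  have hφL : norm2 φ ≤ L :=
    le_div_self (norm2_nonneg φ) hgap (by linarith [opNorm_nonneg (Astar A ψ)])
  have hcoef : 0 ≤ 2 * (1 + lam) := by linarith
  have hbound : ∀ n, norm2 (α n) ≤ L ∧ norm2 (β n) ≤ L := by
    intro n
    induction n with
    | zero => exact ⟨hα0 ▸ hφL, hβ0 ▸ hφL⟩
    | succ k ih =>
      have hα : norm2 (α (k + 1)) ≤ L := hαrec k ▸ norm2_update_le hcoef _ _ φ _ ih.2 hLfix
      exact ⟨hα, hβrec k ▸ norm2_update_le hcoef _ _ φ _ hα hLfix⟩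
  exact ⟨0, fun n _ => (max_le (hbound n).1 (hbound n).2).trans (le_add_of_nonneg_right hε.le)⟩

/-- if 2‖𝒜*(ψ)‖_op < 1, the alternating closed-form updates started at
α₀ = β₀ = φ are eventually bounded by ‖φ‖₂/(1 − 2‖𝒜*(ψ)‖_op) + ε for every ε > 0. -/
theorem statement4 {d s : ℕ} (hd : 0 < d) (hs : 0 < s)
    (A : Fin s → Matrix (Fin d) (Fin d) ℝ) (hA : ∀ k, (A k).IsSymm)
    (φ : Fin d → ℝ) (ψ : Fin s → ℝ) (lam : ℝ) (hlam : 0 ≤ lam)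
    (hop : 2 * opNorm (Astar A ψ) < 1)
    (α β : ℕ → Fin d → ℝ) (hα0 : α 0 = φ) (hβ0 : β 0 = φ)
    (hαrec : ∀ n, α (n + 1) =
      (((2 * (1 + lam)) • ((Amat A (β n))ᵀ * Amat A (β n)) + 1)⁻¹) *ᵥ
        ((2 : ℝ) • ((Astar A ψ) *ᵥ β n) + φ))
    (hβrec : ∀ n, β (n + 1) =
      (((2 * (1 + lam)) • ((Amat A (α (n + 1)))ᵀ * Amat A (α (n + 1))) + 1)⁻¹) *ᵥ
        ((2 : ℝ) • ((Astar A ψ) *ᵥ α (n + 1)) + φ)) :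
    ∀ ε : ℝ, 0 < ε → ∃ K₀ : ℕ, ∀ n : ℕ, K₀ < n →
      max (norm2 (α n)) (norm2 (β n))
        ≤ norm2 φ / (1 - 2 * opNorm (Astar A ψ)) + ε :=
  statement4_general A φ ψ lam hlam hop α β hα0 hβ0 hαrec hβrec
end
end

section
/- Fix Φ ∈ ℝ^{d×n} with λ_min(Ψ(Φ)Ψ(Φ)^T) > 0, and let (Θ_t, c_t, Q_t) be generated by the alternating updates c_{t+1} = (1/n)(X − Q_t M(Θ_t))1_n, Q_{t+1} = argmax_{Q^TQ=I_{d+s}} ⟨R(c_{t+1})M(Θ_t)^T, Q⟩, Θ_{t+1} = (Ψ(Φ)Ψ(Φ)^T)^{−1}Ψ(Φ)R(c_{t+1})^T V_{t+1} where V_{t+1} consists of the last s columns of Q_{t+1}. If a subsequence satisfies lim_j c_{t_j} = c* and lim_j Q_{t_j} = Q*, then Θ_{t_j} also converges, to Θ* = (Ψ(Φ)Ψ(Φ)^T)^{−1}Ψ(Φ)R(c*)^T V* where V* consists of the last s columns of Q*; and if additionally the singular values of R(c*)M(Θ*)^T are distinct, then (Q*, c*, Θ*) is a fixed point of the three updates,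 i.e., c* = (1/n)(X − Q*M(Θ*))1_n, Q* maximizes ⟨R(c*)M(Θ*)^T, Q⟩ over {Q : Q^TQ = I_{d+s}}, and Θ* = (Ψ(Φ)Ψ(Φ)^T)^{−1}Ψ(Φ)R(c*)^T V*; in particular (Q*, c*, Θ*) satisfies the first-order optimality (KKT) conditions of minimizing ℓ(Θ,c,Q,Φ) subject to Q^TQ = I_{d+s}. -/
open Matrix Filter
open scoped BigOperators

noncomputable section

/-- index set of size (d²+d)/2 : pairs (j,k) with j ≤ k -/
abbrev PairIdx (d : ℕ) := {p : Fin d × Fin d // p.1 ≤ p.2}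

/-- squared Frobenius norm -/
def frobSq {m n : Type*} [Fintype m] [Fintype n] (M : Matrix m n ℝ) : ℝ :=
  ∑ i, ∑ j, (M i j) ^ 2

/-- Frobenius inner product ⟨A,B⟩ = tr(AᵀB) -/
def finner {m n : Type*} [Fintype m] [Fintype n] (A B : Matrix m n ℝ) : ℝ :=
  ∑ i, ∑ j, A i j * B i j

/-- Ψ(Φ) ∈ ℝ^{((d²+d)/2)×n}: the i-th column lists the products τ_{i,j}τ_{i,k}, j ≤ k -/
def PsiMat {d n : ℕ} (Φ : Matrix (Fin d) (Fin n) ℝ) : Matrix (PairIdx d) (Fin n) ℝ :=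
  Matrix.of fun p i => Φ p.1.1 i * Φ p.1.2 i

/-- M(Θ,Φ) = [Φᵀ, Ψ(Φ)ᵀΘ]ᵀ ∈ ℝ^{(d+s)×n} -/
def Mmat {d s n : ℕ} (Φ : Matrix (Fin d) (Fin n) ℝ) (Θ : Matrix (PairIdx d) (Fin s) ℝ) :
    Matrix (Fin d ⊕ Fin s) (Fin n) ℝ :=
  Matrix.fromRows Φ (Θᵀ * PsiMat Φ)

/-- ℓ(Θ,c,Q,Φ) = ‖X − c1_nᵀ − Q[Φᵀ, Ψ(Φ)ᵀΘ]ᵀ‖_F² -/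
def ell {D n d s : ℕ} (X : Matrix (Fin D) (Fin n) ℝ)
    (Θ : Matrix (PairIdx d) (Fin s) ℝ) (c : Fin D → ℝ)
    (Q : Matrix (Fin D) (Fin d ⊕ Fin s) ℝ) (Φ : Matrix (Fin d) (Fin n) ℝ) : ℝ :=
  frobSq (X - Matrix.of (fun i (_ : Fin n) => c i) - Q * Mmat Φ Θ)

/-- ℓ_λ(Θ,c,Q,Φ) = ℓ(Θ,c,Q,Φ) + λ‖ΘᵀΨ(Φ)‖_F² -/
def ellReg {D n d s : ℕ} (X : Matrix (Fin D) (Fin n) ℝ) (lam : ℝ)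
    (Θ : Matrix (PairIdx d) (Fin s) ℝ) (c : Fin D → ℝ)
    (Q : Matrix (Fin D) (Fin d ⊕ Fin s) ℝ) (Φ : Matrix (Fin d) (Fin n) ℝ) : ℝ :=
  ell X Θ c Q Φ + lam * frobSq (Θᵀ * PsiMat Φ)

/-- R(c) = X − c1_nᵀ -/
def Rmat {D n : ℕ} (X : Matrix (Fin D) (Fin n) ℝ) (c : Fin D → ℝ) : Matrix (Fin D) (Fin n) ℝ :=
  X - Matrix.of (fun i (_ : Fin n) => c i)

/-- the last s columns of Q (the matrix V) -/
def lastCols {D d s : ℕ} (Q : Matrix (Fin D) (Fin d ⊕ Fin s) ℝ) : Matrix (Fin D) (Fin s) ℝ :=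
  Q.submatrix id Sum.inr

/-!
Each update minimises `ℓ` exactly in its own block of variables: the `c`-update is the row mean
of `X - Q M(Θ)`, and it beats any other centre `c` by `n ‖c - c⁺‖²`; for orthonormal `Q`,
`ℓ = ‖R(c)‖² - 2⟨R(c) M(Θ)ᵀ, Q⟩ + ‖M(Θ)‖²`, so the `Q`-update minimises `ℓ`; and the `Θ`-update
solves a least-squares problem with Gram matrix `Ψ(Φ) Ψ(Φ)ᵀ`. Hence `ℓ` is nonincreasing along
the iteration from step `1` on, and bounded below by its value `ℓ*` at the limit point. Passing to
the limit in `ℓ* ≤ ℓ(Θ_{t_j}, c_{t_j + 1}, Q')` shows that at `(Θ*, c*, Q*)` neither the `c`-update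
nor any orthonormal `Q'` decreases `ℓ`: the first forces `c*` to be its own update, the second is
the maximality of `Q*`. The convergence of `Θ_{t_j}` is continuity of the `Θ`-update.
-/

section Frobenius

variable {m n p : Type*} [Fintype m] [Fintype n] [Fintype p]

lemma finner_eq_trace (A B : Matrix m n ℝ) : finner A B = trace (Aᵀ * B) := by
  simp only [finner, trace, diag_apply, mul_apply, transpose_apply]
  exact Finset.sum_comm

lemma finner_comm (A B : Matrix m n ℝ) : finner A B = finner B A := by
  simp only [finner, mul_comm]

lemma finner_mul_left (A : Matrix m p ℝ) (B : Matrix p n ℝ) (C : Matrix m n ℝ) :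
    finner (A * B) C = finner B (Aᵀ * C) := by
  rw [finner_eq_trace, finner_eq_trace, transpose_mul, Matrix.mul_assoc]

lemma finner_mul_right (A : Matrix m n ℝ) (B : Matrix m p ℝ) (C : Matrix p n ℝ) :
    finner A (B * C) = finner (A * Cᵀ) B := by
  rw [finner_eq_trace, finner_eq_trace, transpose_mul, transpose_transpose,
    ← Matrix.mul_assoc, trace_mul_cycle]

lemma finner_zero_left (B : Matrix m n ℝ) : finner 0 B = 0 := by
  simp [finner]

lemma frobSq_eq_finner (A : Matrix m n ℝ) : frobSq A = finner A A := by
  simp only [frobSq, finner, sq]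

lemma frobSq_nonneg (A : Matrix m n ℝ) : 0 ≤ frobSq A :=
  Finset.sum_nonneg fun _ _ => Finset.sum_nonneg fun _ _ => sq_nonneg _

lemma frobSq_sub (A B : Matrix m n ℝ) :
    frobSq (A - B) = frobSq A - 2 * finner A B + frobSq B := by
  simp only [frobSq, finner, Matrix.sub_apply, Finset.mul_sum, ← Finset.sum_sub_distrib,
    ← Finset.sum_add_distrib]
  exact Finset.sum_congr rfl fun _ _ => Finset.sum_congr rfl fun _ _ => by ring

lemma frobSq_orthonormal_mul [DecidableEq n] {Q : Matrix m n ℝ} (hQ : Qᵀ * Q = 1)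
    (M : Matrix n p ℝ) : frobSq (Q * M) = frobSq M := by
  rw [frobSq_eq_finner, finner_mul_left, ← Matrix.mul_assoc, hQ, Matrix.one_mul,
    frobSq_eq_finner]

end Frobenius

lemma sum_sub_sq_eq_add_card_mul {ι : Type*} [Fintype ι] (f : ι → ℝ) {μ : ℝ}
    (hμ : Fintype.card ι * μ = ∑ k, f k) (x : ℝ) :
    ∑ k, (f k - x) ^ 2 = ∑ k, (f k - μ) ^ 2 + Fintype.card ι * (x - μ) ^ 2 := by
  have h : ∀ k, (f k - x) ^ 2
      = ((f k - μ) ^ 2 + 2 * (μ - x) * f k) + ((x - μ) ^ 2 - 2 * (μ - x) * μ) := fun k => by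
    ring
  simp_rw [h]
  rw [Finset.sum_add_distrib, Finset.sum_add_distrib, ← Finset.mul_sum, ← hμ,
    Finset.sum_const, Finset.card_univ, nsmul_eq_mul]
  ring

lemma frobSq_sub_col_eq_sub_mean_add {m : Type*} [Fintype m] {n : ℕ} (A : Matrix m (Fin n) ℝ)
    (c : m → ℝ) :
    frobSq (A - of fun i (_ : Fin n) => c i)
      = frobSq (A - of fun i (_ : Fin n) => ((1 / (n : ℝ)) • (A *ᵥ fun _ => 1)) i)
        + n * ∑ i, (c i - ((1 / (n : ℝ)) • (A *ᵥ fun _ => 1)) i) ^ 2 := by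
  simp only [frobSq, Finset.mul_sum, ← Finset.sum_add_distrib]
  refine Finset.sum_congr rfl fun i _ => ?_
  simp only [Matrix.sub_apply, of_apply, Pi.smul_apply, mulVec, dotProduct, mul_one, smul_eq_mul]
  have hmean : (n : ℝ) * (1 / n * ∑ k, A i k) = ∑ k, A i k := by
    rcases Nat.eq_zero_or_pos n with rfl | hn
    · simp
    · field_simp
  simpa using sum_sub_sq_eq_add_card_mul (fun k => A i k) (by simpa using hmean) (c i)

lemma Matrix.mul_fromRows {m a b n : Type*} [Fintype a] [Fintype b] (Q : Matrix m (a ⊕ b) ℝ)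
    (A : Matrix a n ℝ) (B : Matrix b n ℝ) :
    Q * fromRows A B = Q.toCols₁ * A + Q.toCols₂ * B := by
  conv_lhs => rw [← fromCols_toCols Q]
  exact fromCols_mul_fromRows _ _ _ _

lemma Matrix.toCols_orthonormal {m a b : Type*} [Fintype m] [DecidableEq a] [DecidableEq b]
    {Q : Matrix m (a ⊕ b) ℝ} (hQ : Qᵀ * Q = 1) :
    Q.toCols₂ᵀ * Q.toCols₁ = 0 ∧ Q.toCols₂ᵀ * Q.toCols₂ = 1 := by
  rw [← fromCols_toCols Q, transpose_fromCols, fromRows_mul_fromCols, ← fromBlocks_one,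
    fromBlocks_inj] at hQ
  exact ⟨hQ.2.2.1, hQ.2.2.2⟩

/-- With `V = Q.toCols₂`, the residual `E` at `Θ̂ = (S Sᵀ)⁻¹ S Rᵀ V` satisfies the normal equations
`Vᵀ E Sᵀ = 0`, so the residual at any other `Θ` is `E` minus a term orthogonal to `E`. -/
lemma frobSq_sub_mul_fromRows_le {m a b p n : Type*} [Fintype m] [Fintype a] [Fintype b]
    [Fintype p] [Fintype n] [DecidableEq a] [DecidableEq b] [DecidableEq p] {S : Matrix p n ℝ}
    (hS : IsUnit (S * Sᵀ).det)
    (R : Matrix m n ℝ) (Φ : Matrix a n ℝ) {Q : Matrix m (a ⊕ b) ℝ} (hQ : Qᵀ * Q = 1)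
    (Θ : Matrix p b ℝ) :
    frobSq (R - Q * fromRows Φ (((S * Sᵀ)⁻¹ * S * Rᵀ * Q.toCols₂)ᵀ * S))
      ≤ frobSq (R - Q * fromRows Φ (Θᵀ * S)) := by
  set G := S * Sᵀ with hG
  set V := Q.toCols₂
  set Θh := G⁻¹ * S * Rᵀ * V
  set E := R - Q * fromRows Φ (Θhᵀ * S) with hEdef
  obtain ⟨hVU, hVV⟩ := Matrix.toCols_orthonormal hQ
  have hGsymm : Gᵀ = G := by rw [hG, transpose_mul, transpose_transpose]
  have hnormal : Θhᵀ * G = Vᵀ * R * Sᵀ := by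
    simp only [Θh, transpose_mul, transpose_transpose, transpose_nonsing_inv, hGsymm,
      Matrix.mul_assoc, nonsing_inv_mul _ hS, Matrix.mul_one]
  have hE : Vᵀ * E * Sᵀ = 0 := by
    rw [hEdef, Matrix.mul_fromRows, Matrix.mul_sub, Matrix.mul_add, ← Matrix.mul_assoc,
      ← Matrix.mul_assoc, hVU, hVV, Matrix.zero_mul, Matrix.one_mul, zero_add, Matrix.sub_mul,
      Matrix.mul_assoc Θhᵀ, ← hG, hnormal, sub_self]
  have hsplit : R - Q * fromRows Φ (Θᵀ * S) = E - V * ((Θ - Θh)ᵀ * S) := by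
    simp only [E, Matrix.mul_fromRows, transpose_sub, Matrix.sub_mul, Matrix.mul_sub]
    abel
  have hcross : finner E (V * ((Θ - Θh)ᵀ * S)) = 0 := by
    rw [finner_comm, finner_mul_left, finner_comm, finner_mul_right, hE, finner_zero_left]
  rw [hsplit, frobSq_sub E, hcross]
  linarith [frobSq_nonneg (V * ((Θ - Θh)ᵀ * S))]

section Continuity

variable {α : Type*} [TopologicalSpace α]

@[fun_prop]
lemma Continuous.frobSq {m n : Type*} [Fintype m] [Fintype n] {f : α → Matrix m n ℝ}
    (hf : Continuous f) : Continuous fun x => frobSq (f x) := by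
  unfold _root_.frobSq
  fun_prop

@[fun_prop]
lemma Continuous.matrix_fromRows {m m' n : Type*} {f : α → Matrix m n ℝ} {g : α → Matrix m' n ℝ}
    (hf : Continuous f) (hg : Continuous g) : Continuous fun x => fromRows (f x) (g x) :=
  continuous_matrix fun i j => by
    cases i <;> simp only [fromRows_apply_inl, fromRows_apply_inr] <;> fun_prop

end Continuity

lemma isClosed_setOf_orthonormal {m k : Type*} [Fintype m] [DecidableEq k] :
    IsClosed {Q : Matrix m k ℝ | Qᵀ * Q = 1} :=
  isClosed_eq (by fun_prop) continuous_const

lemma AntitoneOn.le_of_tendsto_comp {f : ℕ → ℝ} {k : ℕ} (hf : AntitoneOn f (Set.Ici k))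
    {t : ℕ → ℕ} (ht : StrictMono t) {a : ℝ} (hlim : Tendsto (f ∘ t) atTop (nhds a)) (u : ℕ)
    (hu : k ≤ u) : a ≤ f u := by
  refine le_of_tendsto hlim ?_
  filter_upwards [eventually_ge_atTop u] with j hj
  exact hf (Set.mem_Ici.2 hu) (Set.mem_Ici.2 (hu.trans (hj.trans ht.le_apply)))
    (hj.trans ht.le_apply)

section Objective

variable {D n d s : ℕ} (X : Matrix (Fin D) (Fin n) ℝ) (Φ : Matrix (Fin d) (Fin n) ℝ)

def centerUpdate (Q : Matrix (Fin D) (Fin d ⊕ Fin s) ℝ) (Θ : Matrix (PairIdx d) (Fin s) ℝ) :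
    Fin D → ℝ :=
  (1 / (n : ℝ)) • ((X - Q * Mmat Φ Θ) *ᵥ fun _ => 1)

def thetaUpdate (c : Fin D → ℝ) (Q : Matrix (Fin D) (Fin d ⊕ Fin s) ℝ) :
    Matrix (PairIdx d) (Fin s) ℝ :=
  (PsiMat Φ * (PsiMat Φ)ᵀ)⁻¹ * PsiMat Φ * (Rmat X c)ᵀ * lastCols Q

lemma ell_eq_ell_centerUpdate_add (Θ : Matrix (PairIdx d) (Fin s) ℝ) (c : Fin D → ℝ)
    (Q : Matrix (Fin D) (Fin d ⊕ Fin s) ℝ) :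
    ell X Θ c Q Φ = ell X Θ (centerUpdate X Φ Q Θ) Q Φ
      + n * ∑ i, (c i - centerUpdate X Φ Q Θ i) ^ 2 := by
  simp only [ell, sub_right_comm X _ (Q * Mmat Φ Θ)]
  exact frobSq_sub_col_eq_sub_mean_add _ c

lemma ell_eq_of_orthonormal (Θ : Matrix (PairIdx d) (Fin s) ℝ) (c : Fin D → ℝ)
    {Q : Matrix (Fin D) (Fin d ⊕ Fin s) ℝ} (hQ : Qᵀ * Q = 1) :
    ell X Θ c Q Φ = frobSq (Rmat X c) - 2 * finner (Rmat X c * (Mmat Φ Θ)ᵀ) Q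
      + frobSq (Mmat Φ Θ) := by
  rw [ell, ← Rmat, frobSq_sub, finner_mul_right, frobSq_orthonormal_mul hQ]

lemma ell_thetaUpdate_le (hpd : (PsiMat Φ * (PsiMat Φ)ᵀ).PosDef)
    (Θ : Matrix (PairIdx d) (Fin s) ℝ) (c : Fin D → ℝ) {Q : Matrix (Fin D) (Fin d ⊕ Fin s) ℝ}
    (hQ : Qᵀ * Q = 1) : ell X (thetaUpdate X Φ c Q) c Q Φ ≤ ell X Θ c Q Φ :=
  frobSq_sub_mul_fromRows_le ((isUnit_iff_isUnit_det _).mp hpd.isUnit) (Rmat X c) Φ hQ Θ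

lemma continuous_ell : Continuous fun p : (Fin D → ℝ) × Matrix (Fin D) (Fin d ⊕ Fin s) ℝ
    × Matrix (PairIdx d) (Fin s) ℝ => ell X p.2.2 p.1 p.2.1 Φ := by
  unfold ell Mmat
  fun_prop

lemma tendsto_ell {ι : Type*} {l : Filter ι} {Θ' : ι → Matrix (PairIdx d) (Fin s) ℝ}
    {c' : ι → Fin D → ℝ} {Q' : ι → Matrix (Fin D) (Fin d ⊕ Fin s) ℝ}
    {Θ₀ : Matrix (PairIdx d) (Fin s) ℝ} {c₀ : Fin D → ℝ} {Q₀ : Matrix (Fin D) (Fin d ⊕ Fin s) ℝ}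
    (hΘ : Tendsto Θ' l (nhds Θ₀)) (hc : Tendsto c' l (nhds c₀)) (hQ : Tendsto Q' l (nhds Q₀)) :
    Tendsto (fun j => ell X (Θ' j) (c' j) (Q' j) Φ) l (nhds (ell X Θ₀ c₀ Q₀ Φ)) :=
  (((continuous_ell X Φ).tendsto (c₀, Q₀, Θ₀)).comp (hc.prodMk_nhds (hQ.prodMk_nhds hΘ)) :)

lemma continuous_centerUpdate : Continuous fun p : Matrix (Fin D) (Fin d ⊕ Fin s) ℝ
    × Matrix (PairIdx d) (Fin s) ℝ => centerUpdate X Φ p.1 p.2 := by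
  unfold centerUpdate Mmat
  fun_prop

lemma continuous_thetaUpdate : Continuous fun p : (Fin D → ℝ)
    × Matrix (Fin D) (Fin d ⊕ Fin s) ℝ => thetaUpdate (s := s) X Φ p.1 p.2 := by
  unfold thetaUpdate Rmat lastCols
  fun_prop

end Objective

structure IsAlternatingIteration {D n d s : ℕ} (X : Matrix (Fin D) (Fin n) ℝ)
    (Φ : Matrix (Fin d) (Fin n) ℝ) (Θ : ℕ → Matrix (PairIdx d) (Fin s) ℝ) (c : ℕ → Fin D → ℝ)
    (Q : ℕ → Matrix (Fin D) (Fin d ⊕ Fin s) ℝ) : Prop where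
  center_succ : ∀ t, c (t + 1) = centerUpdate X Φ (Q t) (Θ t)
  orthonormal_succ : ∀ t, (Q (t + 1))ᵀ * Q (t + 1) = 1
  finner_le_succ : ∀ t, ∀ Q' : Matrix (Fin D) (Fin d ⊕ Fin s) ℝ, Q'ᵀ * Q' = 1 →
    finner (Rmat X (c (t + 1)) * (Mmat Φ (Θ t))ᵀ) Q'
      ≤ finner (Rmat X (c (t + 1)) * (Mmat Φ (Θ t))ᵀ) (Q (t + 1))
  theta_succ : ∀ t, Θ (t + 1) = thetaUpdate X Φ (c (t + 1)) (Q (t + 1))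

namespace IsAlternatingIteration

variable {D n d s : ℕ} {X : Matrix (Fin D) (Fin n) ℝ} {Φ : Matrix (Fin d) (Fin n) ℝ}
  {Θ : ℕ → Matrix (PairIdx d) (Fin s) ℝ} {c : ℕ → Fin D → ℝ}
  {Q : ℕ → Matrix (Fin D) (Fin d ⊕ Fin s) ℝ} {t : ℕ → ℕ} {cstar : Fin D → ℝ}
  {Qstar : Matrix (Fin D) (Fin d ⊕ Fin s) ℝ} {Θstar : Matrix (PairIdx d) (Fin s) ℝ}

lemma orthonormal (h : IsAlternatingIteration X Φ Θ c Q) {u : ℕ} (hu : 1 ≤ u) :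
    (Q u)ᵀ * Q u = 1 := by
  obtain ⟨k, rfl⟩ := Nat.exists_eq_add_of_le' hu
  exact h.orthonormal_succ k

lemma ell_succ_le (h : IsAlternatingIteration X Φ Θ c Q) (hpd : (PsiMat Φ * (PsiMat Φ)ᵀ).PosDef)
    (u : ℕ) {Q' : Matrix (Fin D) (Fin d ⊕ Fin s) ℝ} (hQ' : Q'ᵀ * Q' = 1) :
    ell X (Θ (u + 1)) (c (u + 1)) (Q (u + 1)) Φ ≤ ell X (Θ u) (c (u + 1)) Q' Φ := by
  have hQ := h.orthonormal_succ u
  calc ell X (Θ (u + 1)) (c (u + 1)) (Q (u + 1)) Φ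
      ≤ ell X (Θ u) (c (u + 1)) (Q (u + 1)) Φ := by
        rw [h.theta_succ u]
        exact ell_thetaUpdate_le X Φ hpd _ _ hQ
    _ ≤ ell X (Θ u) (c (u + 1)) Q' Φ := by
        rw [ell_eq_of_orthonormal X Φ _ _ hQ, ell_eq_of_orthonormal X Φ _ _ hQ']
        linarith [h.finner_le_succ u Q' hQ']

lemma antitoneOn_ell (h : IsAlternatingIteration X Φ Θ c Q)
    (hpd : (PsiMat Φ * (PsiMat Φ)ᵀ).PosDef) :
    AntitoneOn (fun u => ell X (Θ u) (c u) (Q u) Φ) (Set.Ici 1) := by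
  refine antitoneOn_nat_Ici_of_succ_le fun u hu => ?_
  calc ell X (Θ (u + 1)) (c (u + 1)) (Q (u + 1)) Φ
      ≤ ell X (Θ u) (c (u + 1)) (Q u) Φ := h.ell_succ_le hpd u (h.orthonormal hu)
    _ ≤ ell X (Θ u) (c u) (Q u) Φ := by
        rw [ell_eq_ell_centerUpdate_add X Φ _ (c u), h.center_succ u]
        exact le_add_of_nonneg_right (by positivity)

lemma tendsto_theta (h : IsAlternatingIteration X Φ Θ c Q) (ht : StrictMono t)
    (hcs : Tendsto (fun j => c (t j)) atTop (nhds cstar))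
    (hQs : Tendsto (fun j => Q (t j)) atTop (nhds Qstar)) :
    Tendsto (fun j => Θ (t j)) atTop (nhds (thetaUpdate X Φ cstar Qstar)) := by
  refine (((continuous_thetaUpdate X Φ).tendsto _).comp (hcs.prodMk_nhds hQs)).congr' ?_
  filter_upwards [eventually_ge_atTop 1] with j hj
  obtain ⟨k, hk⟩ := Nat.exists_eq_add_of_le' (hj.trans ht.le_apply)
  simp only [Function.comp_apply, hk, h.theta_succ k]

lemma orthonormal_of_tendsto (h : IsAlternatingIteration X Φ Θ c Q) (ht : StrictMono t)
    (hQs : Tendsto (fun j => Q (t j)) atTop (nhds Qstar)) : Qstarᵀ * Qstar = 1 :=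
  isClosed_setOf_orthonormal.mem_of_tendsto hQs <| by
    filter_upwards [eventually_ge_atTop 1] with j hj
    exact h.orthonormal (hj.trans ht.le_apply)

lemma ell_le_of_tendsto (h : IsAlternatingIteration X Φ Θ c Q)
    (hpd : (PsiMat Φ * (PsiMat Φ)ᵀ).PosDef) (ht : StrictMono t)
    (hcs : Tendsto (fun j => c (t j)) atTop (nhds cstar))
    (hQs : Tendsto (fun j => Q (t j)) atTop (nhds Qstar))
    (hΘs : Tendsto (fun j => Θ (t j)) atTop (nhds Θstar))
    {Q' : ℕ → Matrix (Fin D) (Fin d ⊕ Fin s) ℝ} {Q'star : Matrix (Fin D) (Fin d ⊕ Fin s) ℝ}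
    (hQ' : ∀ᶠ j in atTop, (Q' j)ᵀ * Q' j = 1) (hQ's : Tendsto Q' atTop (nhds Q'star)) :
    ell X Θstar cstar Qstar Φ ≤ ell X Θstar (centerUpdate X Φ Qstar Θstar) Q'star Φ := by
  have hbound := (h.antitoneOn_ell hpd).le_of_tendsto_comp ht (tendsto_ell X Φ hΘs hcs hQs)
  have hcenter : Tendsto (fun j => c (t j + 1)) atTop
      (nhds (centerUpdate X Φ Qstar Θstar)) := by
    exact (((continuous_centerUpdate X Φ).tendsto _).comp (hQs.prodMk_nhds hΘs) :).congr
      fun j => (h.center_succ (t j)).symm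
  refine ge_of_tendsto (tendsto_ell X Φ hΘs hcenter hQ's) ?_
  filter_upwards [hQ'] with j hj
  exact (hbound _ (Nat.le_add_left 1 (t j))).trans (h.ell_succ_le hpd (t j) hj)

lemma eq_centerUpdate_of_tendsto (h : IsAlternatingIteration X Φ Θ c Q) (hn : 0 < n)
    (hpd : (PsiMat Φ * (PsiMat Φ)ᵀ).PosDef) (ht : StrictMono t)
    (hcs : Tendsto (fun j => c (t j)) atTop (nhds cstar))
    (hQs : Tendsto (fun j => Q (t j)) atTop (nhds Qstar))
    (hΘs : Tendsto (fun j => Θ (t j)) atTop (nhds Θstar)) :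
    cstar = centerUpdate X Φ Qstar Θstar := by
  have hle := h.ell_le_of_tendsto hpd ht hcs hQs hΘs
    (eventually_ge_atTop 1 |>.mono fun j hj => h.orthonormal (hj.trans ht.le_apply)) hQs
  rw [ell_eq_ell_centerUpdate_add X Φ _ cstar] at hle
  have hsq : ∑ i, (cstar i - centerUpdate X Φ Qstar Θstar i) ^ 2 ≤ 0 :=
    nonpos_of_mul_nonpos_right (by linarith) (Nat.cast_pos.2 hn)
  funext i
  have hi := (Finset.single_le_sum (fun j _ => sq_nonneg (cstar j - centerUpdate X Φ Qstar Θstar j))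
    (Finset.mem_univ i)).trans hsq
  exact sub_eq_zero.1 (pow_eq_zero_iff two_ne_zero |>.1 (hi.antisymm (sq_nonneg _)))

lemma finner_le_of_tendsto (h : IsAlternatingIteration X Φ Θ c Q) (hn : 0 < n)
    (hpd : (PsiMat Φ * (PsiMat Φ)ᵀ).PosDef) (ht : StrictMono t)
    (hcs : Tendsto (fun j => c (t j)) atTop (nhds cstar))
    (hQs : Tendsto (fun j => Q (t j)) atTop (nhds Qstar))
    (hΘs : Tendsto (fun j => Θ (t j)) atTop (nhds Θstar))
    {Q' : Matrix (Fin D) (Fin d ⊕ Fin s) ℝ} (hQ' : Q'ᵀ * Q' = 1) :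
    finner (Rmat X cstar * (Mmat Φ Θstar)ᵀ) Q'
      ≤ finner (Rmat X cstar * (Mmat Φ Θstar)ᵀ) Qstar := by
  have hle := h.ell_le_of_tendsto hpd ht hcs hQs hΘs (.of_forall fun _ => hQ')
    tendsto_const_nhds
  rw [← h.eq_centerUpdate_of_tendsto hn hpd ht hcs hQs hΘs,
    ell_eq_of_orthonormal X Φ _ _ (h.orthonormal_of_tendsto ht hQs),
    ell_eq_of_orthonormal X Φ _ _ hQ'] at hle
  linarith

end IsAlternatingIteration

theorem statement18_general {D n d s : ℕ} (hn : 0 < n)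
    (X : Matrix (Fin D) (Fin n) ℝ)
    (Φ : Matrix (Fin d) (Fin n) ℝ)
    (hpd : (PsiMat Φ * (PsiMat Φ)ᵀ).PosDef)
    (Θ : ℕ → Matrix (PairIdx d) (Fin s) ℝ) (c : ℕ → Fin D → ℝ)
    (Q : ℕ → Matrix (Fin D) (Fin d ⊕ Fin s) ℝ)
    (hc : ∀ t, c (t + 1) = (1 / (n : ℝ)) • ((X - Q t * Mmat Φ (Θ t)) *ᵥ fun _ => (1 : ℝ)))
    (hQorth : ∀ t, (Q (t + 1))ᵀ * Q (t + 1) = 1)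
    (hQmax : ∀ t, ∀ Q' : Matrix (Fin D) (Fin d ⊕ Fin s) ℝ, Q'ᵀ * Q' = 1 →
        finner (Rmat X (c (t + 1)) * (Mmat Φ (Θ t))ᵀ) Q'
          ≤ finner (Rmat X (c (t + 1)) * (Mmat Φ (Θ t))ᵀ) (Q (t + 1)))
    (hΘ : ∀ t, Θ (t + 1) =
        (PsiMat Φ * (PsiMat Φ)ᵀ)⁻¹ * PsiMat Φ * (Rmat X (c (t + 1)))ᵀ * lastCols (Q (t + 1)))
    (t : ℕ → ℕ) (hmono : StrictMono t)
    (cstar : Fin D → ℝ) (Qstar : Matrix (Fin D) (Fin d ⊕ Fin s) ℝ)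
    (hcs : Tendsto (fun j => c (t j)) atTop (nhds cstar))
    (hQs : Tendsto (fun j => Q (t j)) atTop (nhds Qstar))
    (Θstar : Matrix (PairIdx d) (Fin s) ℝ)
    (hΘstar : Θstar = (PsiMat Φ * (PsiMat Φ)ᵀ)⁻¹ * PsiMat Φ * (Rmat X cstar)ᵀ * lastCols Qstar) :
    Tendsto (fun j => Θ (t j)) atTop (nhds Θstar)
    ∧ (Function.Injective
          (Matrix.isHermitian_conjTranspose_mul_self
            (Rmat X cstar * (Mmat Φ Θstar)ᵀ)).eigenvalues →
        cstar = (1 / (n : ℝ)) • ((X - Qstar * Mmat Φ Θstar) *ᵥ fun _ => (1 : ℝ))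
        ∧ Qstarᵀ * Qstar = 1
        ∧ (∀ Q' : Matrix (Fin D) (Fin d ⊕ Fin s) ℝ, Q'ᵀ * Q' = 1 →
            finner (Rmat X cstar * (Mmat Φ Θstar)ᵀ) Q'
              ≤ finner (Rmat X cstar * (Mmat Φ Θstar)ᵀ) Qstar)
        ∧ Θstar = (PsiMat Φ * (PsiMat Φ)ᵀ)⁻¹ * PsiMat Φ * (Rmat X cstar)ᵀ * lastCols Qstar) := by
  have h : IsAlternatingIteration X Φ Θ c Q := ⟨hc, hQorth, hQmax, hΘ⟩
  have hΘs : Tendsto (fun j => Θ (t j)) atTop (nhds Θstar) :=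
    hΘstar ▸ h.tendsto_theta hmono hcs hQs
  exact ⟨hΘs, fun _ => ⟨h.eq_centerUpdate_of_tendsto hn hpd hmono hcs hQs hΘs,
    h.orthonormal_of_tendsto hmono hQs,
    fun _ hQ' => h.finner_le_of_tendsto hn hpd hmono hcs hQs hΘs hQ', hΘstar⟩⟩

/-- convergence of the inner (regression) alternating iteration: along any
convergent subsequence (c_{t_j}, Q_{t_j}) → (c*, Q*), also Θ_{t_j} → Θ*, where
Θ* = (Ψ(Φ)Ψ(Φ)ᵀ)⁻¹Ψ(Φ)R(c*)ᵀV*; and if the singular values of R(c*)M(Θ*)ᵀ are distinct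
(i.e. the eigenvalues of (R(c*)M(Θ*)ᵀ)ᴴ(R(c*)M(Θ*)ᵀ) are pairwise distinct), the limit
(Q*, c*, Θ*) is a fixed point of the three closed-form updates — the first-order KKT
conditions of minimizing ℓ(Θ,c,Q,Φ) subject to QᵀQ = I. -/
theorem statement18 {D n d s : ℕ} (hD : 0 < D) (hn : 0 < n) (hd : 0 < d) (hs : 0 < s)
    (hds : d + s ≤ D) (X : Matrix (Fin D) (Fin n) ℝ)
    (Φ : Matrix (Fin d) (Fin n) ℝ)
    (hpd : (PsiMat Φ * (PsiMat Φ)ᵀ).PosDef)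
    (Θ : ℕ → Matrix (PairIdx d) (Fin s) ℝ) (c : ℕ → Fin D → ℝ)
    (Q : ℕ → Matrix (Fin D) (Fin d ⊕ Fin s) ℝ)
    (hc : ∀ t, c (t + 1) = (1 / (n : ℝ)) • ((X - Q t * Mmat Φ (Θ t)) *ᵥ fun _ => (1 : ℝ)))
    (hQorth : ∀ t, (Q (t + 1))ᵀ * Q (t + 1) = 1)
    (hQmax : ∀ t, ∀ Q' : Matrix (Fin D) (Fin d ⊕ Fin s) ℝ, Q'ᵀ * Q' = 1 →
        finner (Rmat X (c (t + 1)) * (Mmat Φ (Θ t))ᵀ) Q'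
          ≤ finner (Rmat X (c (t + 1)) * (Mmat Φ (Θ t))ᵀ) (Q (t + 1)))
    (hΘ : ∀ t, Θ (t + 1) =
        (PsiMat Φ * (PsiMat Φ)ᵀ)⁻¹ * PsiMat Φ * (Rmat X (c (t + 1)))ᵀ * lastCols (Q (t + 1)))
    (t : ℕ → ℕ) (hmono : StrictMono t)
    (cstar : Fin D → ℝ) (Qstar : Matrix (Fin D) (Fin d ⊕ Fin s) ℝ)
    (hcs : Tendsto (fun j => c (t j)) atTop (nhds cstar))
    (hQs : Tendsto (fun j => Q (t j)) atTop (nhds Qstar))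
    (Θstar : Matrix (PairIdx d) (Fin s) ℝ)
    (hΘstar : Θstar = (PsiMat Φ * (PsiMat Φ)ᵀ)⁻¹ * PsiMat Φ * (Rmat X cstar)ᵀ * lastCols Qstar) :
    Tendsto (fun j => Θ (t j)) atTop (nhds Θstar)
    ∧ (Function.Injective
          (Matrix.isHermitian_conjTranspose_mul_self
            (Rmat X cstar * (Mmat Φ Θstar)ᵀ)).eigenvalues →
        cstar = (1 / (n : ℝ)) • ((X - Qstar * Mmat Φ Θstar) *ᵥ fun _ => (1 : ℝ))
        ∧ Qstarᵀ * Qstar = 1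
        ∧ (∀ Q' : Matrix (Fin D) (Fin d ⊕ Fin s) ℝ, Q'ᵀ * Q' = 1 →
            finner (Rmat X cstar * (Mmat Φ Θstar)ᵀ) Q'
              ≤ finner (Rmat X cstar * (Mmat Φ Θstar)ᵀ) Qstar)
        ∧ Θstar = (PsiMat Φ * (PsiMat Φ)ᵀ)⁻¹ * PsiMat Φ * (Rmat X cstar)ᵀ * lastCols Qstar) :=
  statement18_general hn X Φ hpd Θ c Q hc hQorth hQmax hΘ t hmono cstar Qstar hcs hQs Θstar hΘstar
end
end
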